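/- arXiv:2106.13481 — 4 statements merged into one kernel-verified Lean document; each statement's English description precedes it below -/
import Mathlib

section
/- Let λ > 0, α > 0 with λα < 1, and let X ∼ Poi*_λ(α) be the zero-truncated degenerate Poisson random variable with parameter α. Then for every integer n ≥ 1, the falling factorial moment satisfies E[(X)_n] = α^n (1)_{n,λ} / ( (1 − (1+λα)^{−1/λ}) (1+λα)^n ). -/
/-- The lambda-falling factorial `(x)_{n,lam}`. -/
noncomputable def dffac (lam x : ℝ) (n : ℕ) : ℝ := ∏ i ∈ Finset.range n, (x - i * lam)

/-- The ordinary falling factorial `(x)_n`. -/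
noncomputable def ffac (x : ℝ) (n : ℕ) : ℝ := ∏ i ∈ Finset.range n, (x - i)

/-- The rising factorial. -/
noncomputable def rfac (x : ℝ) (n : ℕ) : ℝ := ∏ i ∈ Finset.range n, (x + i)

/-- Expectation of `f(X)` for the zero-truncated degenerate Poisson random
variable `X ~ Poi*_lam(a)`: the series runs over `i = 1, 2, 3, ...`. -/
noncomputable def ztPoiE (lam a : ℝ) (f : ℕ → ℝ) : ℝ :=
  ((1 + lam * a) ^ (1 / lam) - 1)⁻¹ *
    ∑' i : ℕ, f (i + 1) * dffac lam 1 (i + 1) * a ^ (i + 1) / ((i + 1).factorial : ℝ)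


lemma ffac_succ (x : ℝ) (n : ℕ) : ffac x (n+1) = ffac x n * (x - n) :=
  Finset.prod_range_succ _ _

lemma ffac_succ' (x : ℝ) (n : ℕ) : ffac x (n+1) = ffac (x-1) n * x := by
  rw [ffac, Finset.prod_range_succ']
  simp only [Nat.cast_zero, sub_zero]
  congr 1
  apply Finset.prod_congr rfl
  intro i _
  push_cast
  ring

lemma ffac_nat_mul_factorial (j n : ℕ) :
    ffac ((j+n : ℕ) : ℝ) n * (j.factorial : ℝ) = ((j+n).factorial : ℝ) := by
  induction n with
  | zero => simp [ffac]
  | succ n ih =>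
      have : ((j + (n+1) : ℕ) : ℝ) - 1 = ((j + n : ℕ) : ℝ) := by push_cast; ring
      rw [ffac_succ', this]
      have : j + (n+1) = (j + n) + 1 := by ring
      rw [this, Nat.factorial_succ]
      push_cast
      push_cast at ih
      nlinarith [ih]

lemma ffac_nat_zero (m n : ℕ) (h : m < n) : ffac (m : ℝ) n = 0 := by
  apply Finset.prod_eq_zero (Finset.mem_range.mpr h)
  simp

lemma dffac_add (lam x : ℝ) (p q : ℕ) :
    dffac lam x (p + q) = dffac lam x p * dffac lam (x - p * lam) q := by
  rw [dffac, Finset.prod_range_add]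
  congr 1
  apply Finset.prod_congr rfl
  intro i _
  push_cast
  ring

lemma dffac_eq_ffac (lam c : ℝ) (hlam : lam ≠ 0) (j : ℕ) :
    dffac lam c j = lam ^ j * ffac (c / lam) j := by
  rw [dffac, ffac]
  rw [show lam ^ j = ∏ _i ∈ Finset.range j, lam by simp]
  rw [← Finset.prod_mul_distrib]
  apply Finset.prod_congr rfl
  intro i _
  field_simp

open Filter Topology

/-- Ratio-test helper: if eventually `f (j+1) = q j * f j` with `|q j| → L < 1`,
then `f` is summable. -/
lemma summable_of_ratio_tendsto (f q : ℕ → ℝ) (L : ℝ) (hL : L < 1)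
    (hq : ∀ᶠ j in atTop, f (j+1) = q j * f j)
    (hlim : Tendsto (fun j => |q j|) atTop (𝓝 L)) : Summable f := by
  have hL0 : 0 ≤ L := ge_of_tendsto' hlim fun j => abs_nonneg _
  set r : ℝ := (L + 1) / 2 with hr
  have hrL : L < r := by rw [hr]; linarith
  have hr1 : r < 1 := by rw [hr]; linarith
  apply summable_of_ratio_norm_eventually_le hr1
  filter_upwards [hq, hlim.eventually_lt_const hrL] with j hj hj'
  rw [hj]
  simp only [norm_mul, Real.norm_eq_abs]
  exact mul_le_mul_of_nonneg_right hj'.le (abs_nonneg _)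

lemma tendsto_ratio_abs (c y : ℝ) :
    Tendsto (fun j : ℕ => |(c - j) * y / (j + 1)|) atTop (𝓝 |y|) := by
  have h1 : Tendsto (fun j : ℕ => ((j : ℝ) + 1)) atTop atTop :=
    tendsto_natCast_atTop_atTop.atTop_add tendsto_const_nhds
  have h2 : Tendsto (fun j : ℕ => (c + 1) / ((j : ℝ) + 1)) atTop (𝓝 0) :=
    Tendsto.div_atTop tendsto_const_nhds h1
  have h3 : Tendsto (fun j : ℕ => (c - j) * y / ((j : ℝ) + 1)) atTop (𝓝 (-y)) := by
    have : ∀ j : ℕ, (c - j) * y / ((j : ℝ) + 1) = ((c + 1) / ((j : ℝ) + 1) - 1) * y := by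
      intro j
      have : ((j : ℝ) + 1) ≠ 0 := by positivity
      field_simp
      ring
    simp_rw [this]
    have := (h2.sub_const 1).mul_const y
    simpa using this
  have := h3.abs
  simpa using this

lemma summable_ffac (c r : ℝ) (hr : |r| < 1) :
    Summable (fun j => ffac c j * r ^ j / (j.factorial : ℝ)) := by
  apply summable_of_ratio_tendsto _ (fun j => (c - j) * r / (j + 1)) |r| hr
  · filter_upwards with j
    rw [ffac_succ, pow_succ, Nat.factorial_succ]
    have h1 : ((j.factorial : ℝ)) ≠ 0 := Nat.cast_ne_zero.mpr j.factorial_ne_zero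
    have h2 : ((j : ℝ) + 1) ≠ 0 := by positivity
    push_cast
    field_simp
  · exact tendsto_ratio_abs c r

lemma summable_ffac_mul (c r : ℝ) (hr : |r| < 1) :
    Summable (fun j : ℕ => (j : ℝ) * (ffac c j * r ^ j / (j.factorial : ℝ))) := by
  apply summable_of_ratio_tendsto _
    (fun j => ((j : ℝ) + 1) / j * ((c - j) * r / (j + 1))) |r| hr
  · filter_upwards [eventually_ge_atTop 1] with j hj
    have hj0 : ((j : ℝ)) ≠ 0 := by
      have : 0 < j := hj
      exact_mod_cast this.ne'
    rw [ffac_succ, pow_succ, Nat.factorial_succ]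
    have h1 : ((j.factorial : ℝ)) ≠ 0 := Nat.cast_ne_zero.mpr j.factorial_ne_zero
    have h2 : ((j : ℝ) + 1) ≠ 0 := by positivity
    push_cast
    field_simp
  · have h1 : Tendsto (fun j : ℕ => ((j : ℝ) + 1) / j) atTop (𝓝 1) := by
      have h0 : Tendsto (fun j : ℕ => ((j : ℝ))) atTop atTop := tendsto_natCast_atTop_atTop
      have : Tendsto (fun j : ℕ => 1 + 1 / (j : ℝ)) atTop (𝓝 (1 + 0)) :=
        tendsto_const_nhds.add (Tendsto.div_atTop tendsto_const_nhds h0)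
      apply Tendsto.congr' _ (by simpa using this)
      filter_upwards [eventually_ge_atTop 1] with j hj
      have hj0 : ((j : ℝ)) ≠ 0 := by
        have : 0 < j := hj
        exact_mod_cast this.ne'
      field_simp
    have := (h1.abs.mul (tendsto_ratio_abs c r))
    simp only [abs_mul] at this ⊢
    simpa using this

lemma ffac_rec (c : ℝ) (j : ℕ) :
    ffac c (j+1) / ((j+1).factorial : ℝ) * ((j:ℝ)+1) = (c - j) * (ffac c j / (j.factorial : ℝ)) := by
  rw [ffac_succ, Nat.factorial_succ]
  have h1 : ((j.factorial : ℝ)) ≠ 0 := Nat.cast_ne_zero.mpr j.factorial_ne_zero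
  have h2 : ((j : ℝ) + 1) ≠ 0 := by positivity
  push_cast
  field_simp

/-- The generalized binomial series. -/
lemma binomial_series (c x : ℝ) (hx0 : 0 ≤ x) (hx1 : x < 1) :
    ∑' j : ℕ, ffac c j * x ^ j / (j.factorial : ℝ) = (1 + x) ^ c := by
  set a : ℕ → ℝ := fun j => ffac c j / (j.factorial : ℝ) with ha
  have hrec : ∀ j : ℕ, a (j+1) * ((j:ℝ)+1) = (c - j) * a j := fun j => ffac_rec c j
  have habs : ∀ j : ℕ, |a j| = |ffac c j| / (j.factorial : ℝ) := by
    intro j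
    rw [ha, abs_div, Nat.abs_cast]
  set ρ : ℝ := (1 + x) / 2 with hρ
  have hρ0 : 0 < ρ := by rw [hρ]; linarith
  have hρ1 : ρ < 1 := by rw [hρ]; linarith
  have hxρ : x < ρ := by rw [hρ]; linarith
  set t : Set ℝ := Set.Ioo (-ρ) ρ with ht
  have hmem : ∀ y ∈ t, |y| < ρ := fun y hy => abs_lt.mpr ⟨hy.1, hy.2⟩
  set g : ℕ → ℝ → ℝ := fun j y => a j * y ^ j with hg
  set d : ℕ → ℝ → ℝ := fun j y => a j * ((j:ℝ) * y ^ (j-1)) with hd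
  set u : ℕ → ℝ := fun j => (j:ℝ) * |a j| * ρ ^ (j-1) with hu
  have hρa : |ρ| < 1 := by rw [abs_of_pos hρ0]; exact hρ1
  -- summability of `u`
  have habs2 : ∀ j : ℕ, |(j:ℝ) * (ffac c j * ρ ^ j / (j.factorial : ℝ))|
      = (j:ℝ) * |a j| * ρ ^ j := by
    intro j
    rw [abs_mul, Nat.abs_cast, abs_div, abs_mul, abs_pow, abs_of_pos hρ0, Nat.abs_cast,
      habs j]
    ring
  have husum : Summable u := by
    have h2 := (summable_ffac_mul c ρ hρa).abs
    have h3 : Summable (fun j : ℕ =>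
        (1/ρ) * |(j : ℝ) * (ffac c j * ρ ^ j / (j.factorial : ℝ))|) := h2.mul_left _
    apply h3.congr
    intro j
    rw [habs2 j]
    match j with
    | 0 => simp [hu]
    | j+1 =>
        have h : u (j+1) = ((j+1:ℕ):ℝ) * |a (j+1)| * ρ ^ j := by simp [hu]
        rw [h, pow_succ]
        push_cast
        field_simp
  -- derivatives
  have hderiv : ∀ (j : ℕ) (y : ℝ), y ∈ t → HasDerivAt (g j) (d j y) y := by
    intro j y _
    exact (hasDerivAt_pow j y).const_mul (a j)
  have hbound : ∀ (j : ℕ) (y : ℝ), y ∈ t → ‖d j y‖ ≤ u j := by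
    intro j y hy
    rw [hd, hu]
    simp only [Real.norm_eq_abs, abs_mul, Nat.abs_cast, abs_pow]
    rw [show (j:ℝ) * |a j| * ρ ^ (j-1) = |a j| * ((j:ℝ) * ρ ^ (j-1)) by ring]
    apply mul_le_mul_of_nonneg_left _ (abs_nonneg _)
    apply mul_le_mul_of_nonneg_left _ (Nat.cast_nonneg _)
    exact pow_le_pow_left₀ (abs_nonneg _) (hmem y hy).le _
  have h0t : (0:ℝ) ∈ t := ⟨by linarith, hρ0⟩
  have hxt : x ∈ t := ⟨by linarith, hxρ⟩
  have hg0 : Summable (fun j => g j 0) := by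
    apply (summable_ffac c 0 (by simp)).congr
    intro j
    rw [hg, ha]
    ring
  set f : ℝ → ℝ := fun y => ∑' j : ℕ, g j y with hf
  have hfderiv : ∀ y ∈ t, HasDerivAt f (∑' j : ℕ, d j y) y := by
    intro y hy
    exact hasDerivAt_tsum_of_isPreconnected husum isOpen_Ioo (convex_Ioo _ _).isPreconnected
      hderiv hbound h0t hg0 hy
  -- the ODE `(1+y) * D y = c * f y`
  have hode : ∀ y ∈ t, (1 + y) * (∑' j : ℕ, d j y) = c * f y := by
    intro y hy
    have hy1 : |y| < 1 := lt_trans (hmem y hy) hρ1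
    have Sa : Summable (fun j : ℕ => a j * y ^ j) := by
      apply (summable_ffac c y hy1).congr
      intro j; rw [ha]; ring
    have Se : Summable (fun j : ℕ => (j:ℝ) * a j * y ^ j) := by
      apply (summable_ffac_mul c y hy1).congr
      intro j; rw [ha]; ring
    have Scm : Summable (fun j : ℕ => (c - (j:ℝ)) * a j * y ^ j) := by
      apply ((Sa.mul_left c).sub Se).congr
      intro j; ring
    have hd1 : ∀ j : ℕ, d (j+1) y = (c - (j:ℝ)) * a j * y ^ j := by
      intro j
      rw [hd]
      show a (j+1) * (((j+1:ℕ):ℝ) * y ^ j) = (c - (j:ℝ)) * a j * y ^ j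
      push_cast
      rw [show a (j+1) * (((j:ℝ)+1) * y ^ j) = (a (j+1) * ((j:ℝ)+1)) * y ^ j by ring, hrec j]
    have Sd1 : Summable (fun j : ℕ => d (j+1) y) := Scm.congr (fun j => (hd1 j).symm)
    have Sd : Summable (fun j : ℕ => d j y) := (summable_nat_add_iff 1).mp Sd1
    have hD : (∑' j : ℕ, d j y) = ∑' j : ℕ, (c - (j:ℝ)) * a j * y ^ j := by
      rw [Sd.tsum_eq_zero_add]
      have : d 0 y = 0 := by simp [hd]
      rw [this, zero_add]
      exact tsum_congr hd1
    have hyD : y * (∑' j : ℕ, d j y) = ∑' j : ℕ, (j:ℝ) * a j * y ^ j := by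
      rw [hD, ← tsum_mul_left]
      rw [Se.tsum_eq_zero_add]
      simp only [Nat.cast_zero, zero_mul, zero_add]
      apply tsum_congr
      intro j
      push_cast
      rw [show y * ((c - (j:ℝ)) * a j * y ^ j) = ((c - (j:ℝ)) * a j) * y ^ (j+1) by
        rw [pow_succ]; ring]
      rw [← hrec j, pow_succ]
      ring
    calc (1 + y) * (∑' j : ℕ, d j y)
        = (∑' j : ℕ, d j y) + y * (∑' j : ℕ, d j y) := by ring
      _ = (∑' j : ℕ, (c - (j:ℝ)) * a j * y ^ j) + ∑' j : ℕ, (j:ℝ) * a j * y ^ j := by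
          rw [hyD, hD]
      _ = ∑' j : ℕ, ((c - (j:ℝ)) * a j * y ^ j + (j:ℝ) * a j * y ^ j) := (Summable.tsum_add Scm Se).symm
      _ = ∑' j : ℕ, c * (a j * y ^ j) := by
          apply tsum_congr; intro j; ring
      _ = c * f y := by rw [tsum_mul_left]
  -- the auxiliary function `F` is constant
  set F : ℝ → ℝ := fun y => f y * (1 + y) ^ (-c) with hF
  have hFderiv : ∀ y ∈ t, HasDerivAt F 0 y := by
    intro y hy
    have h1y : (0:ℝ) < 1 + y := by
      have h := hy.1
      linarith
    have hr : HasDerivAt (fun z : ℝ => (1 + z) ^ (-c)) (-c * (1 + y) ^ (-c - 1) * 1) y := by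
      have h := Real.hasDerivAt_rpow_const (x := 1 + y) (p := -c) (Or.inl h1y.ne')
      exact h.comp y ((hasDerivAt_id y).const_add 1)
    have hcomb := (hfderiv y hy).mul hr
    have : (∑' j : ℕ, d j y) * (1 + y) ^ (-c) + f y * (-c * (1 + y) ^ (-c - 1) * 1) = 0 := by
      have key := hode y hy
      have hsplit : (1 + y) ^ (-c) = (1 + y) ^ (-c - 1) * (1 + y) := by
        have h := Real.rpow_add_one h1y.ne' (-c - 1)
        norm_num at h
        rw [← h]
      rw [hsplit]
      linear_combination (1 + y) ^ (-c - 1) * key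
    rw [← this]
    exact hcomb
  -- conclude `F x = F 0`
  have hsub : Set.Icc (0:ℝ) x ⊆ t := by
    intro z hz
    exact ⟨by linarith [hz.1], by linarith [hz.2]⟩
  have hconst : F x = F 0 := by
    apply constant_of_has_deriv_right_zero (f := F) (a := 0) (b := x)
    · intro z hz
      exact (hFderiv z (hsub hz)).continuousAt.continuousWithinAt
    · intro z hz
      exact (hFderiv z (hsub (Set.mem_Icc.mpr ⟨hz.1, hz.2.le⟩))).hasDerivWithinAt
    · exact Set.mem_Icc.mpr ⟨hx0, le_refl x⟩
  have hf0 : f 0 = 1 := by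
    have h : ∀ j : ℕ, j ≠ 0 → g j 0 = 0 := by
      intro j hj
      rcases Nat.exists_eq_succ_of_ne_zero hj with ⟨k, rfl⟩
      simp [hg]
    show (∑' j : ℕ, g j 0) = 1
    rw [tsum_eq_single 0 h]
    simp [hg, ha, ffac]
  have hF0 : F 0 = 1 := by
    show f 0 * (1 + (0:ℝ)) ^ (-c) = 1
    rw [hf0]
    simp
  have h1x : (0:ℝ) < 1 + x := by linarith
  have hfx : f x = (1 + x) ^ c := by
    have h2 : f x * (1 + x) ^ (-c) = 1 := hconst.trans hF0
    rw [Real.rpow_neg h1x.le] at h2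
    have hpos : (0:ℝ) < (1 + x) ^ c := Real.rpow_pos_of_pos h1x c
    field_simp at h2
    linarith [h2]
  rw [← hfx, hf]
  apply tsum_congr
  intro j
  rw [hg, ha]
  ring


theorem stmt_12 (lam a : ℝ) (hlam : 0 < lam) (ha : 0 < a) (hla : lam * a < 1)
    (n : ℕ) (hn : 1 ≤ n) :
    ztPoiE lam a (fun i => ffac (i : ℝ) n) =
      a ^ n * dffac lam 1 n /
        ((1 - (1 + lam * a) ^ (-(1 / lam))) * (1 + lam * a) ^ n) := by
  have hlam' : lam ≠ 0 := hlam.ne'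
  have hx0 : 0 < lam * a := mul_pos hlam ha
  set c : ℝ := 1 / lam - n with hc
  -- per-term formula
  have key : ∀ j : ℕ, ffac ((j + n : ℕ) : ℝ) n * dffac lam 1 (j + n) * a ^ (j + n)
        / (((j + n).factorial : ℝ))
      = (dffac lam 1 n * a ^ n) * (ffac c j * (lam * a) ^ j / (j.factorial : ℝ)) := by
    intro j
    have hfj : ((j.factorial : ℝ)) ≠ 0 := Nat.cast_ne_zero.mpr j.factorial_ne_zero
    have hfjn : (((j + n).factorial : ℝ)) ≠ 0 := Nat.cast_ne_zero.mpr (j + n).factorial_ne_zero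
    have h1 : ffac ((j + n : ℕ) : ℝ) n = ((j + n).factorial : ℝ) / (j.factorial : ℝ) := by
      rw [← ffac_nat_mul_factorial j n]
      field_simp
    have h2 : dffac lam 1 (j + n) = dffac lam 1 n * dffac lam (1 - n * lam) j := by
      rw [add_comm j n, dffac_add]
    have h3 : dffac lam (1 - n * lam) j = lam ^ j * ffac c j := by
      rw [dffac_eq_ffac lam _ hlam', hc]
      congr 1
      field_simp
    rw [h1, h2, h3, pow_add, mul_pow]
    field_simp
  set F : ℕ → ℝ := fun i =>
    ffac ((i + 1 : ℕ) : ℝ) n * dffac lam 1 (i + 1) * a ^ (i + 1) / (((i + 1).factorial : ℝ))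
    with hF
  have hidx : ∀ j : ℕ, j + (n - 1) + 1 = j + n := fun j => by omega
  have hFshift : ∀ j : ℕ, F (j + (n - 1))
      = (dffac lam 1 n * a ^ n) * (ffac c j * (lam * a) ^ j / (j.factorial : ℝ)) := by
    intro j
    rw [hF]
    simp only
    rw [hidx j]
    exact key j
  have hxa : |lam * a| < 1 := by rw [abs_of_pos hx0]; exact hla
  have SG : Summable (fun j : ℕ => ffac c j * (lam * a) ^ j / (j.factorial : ℝ)) :=
    summable_ffac c (lam * a) hxa
  have SFshift : Summable (fun j : ℕ => F (j + (n - 1))) :=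
    (SG.mul_left (dffac lam 1 n * a ^ n)).congr (fun j => (hFshift j).symm)
  have SF : Summable F := (summable_nat_add_iff (n - 1)).mp SFshift
  have hvan : ∀ i ∈ Finset.range (n - 1), F i = 0 := by
    intro i hi
    have : i + 1 < n := by
      have := Finset.mem_range.mp hi
      omega
    rw [hF]
    simp only
    rw [ffac_nat_zero (i + 1) n this]
    ring
  have htsum : (∑' i : ℕ, F i) = dffac lam 1 n * a ^ n * (1 + lam * a) ^ c := by
    rw [← SF.sum_add_tsum_nat_add (n - 1), Finset.sum_eq_zero hvan, zero_add]
    calc (∑' j : ℕ, F (j + (n - 1)))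
        = ∑' j : ℕ, (dffac lam 1 n * a ^ n) * (ffac c j * (lam * a) ^ j / (j.factorial : ℝ)) :=
          tsum_congr hFshift
      _ = (dffac lam 1 n * a ^ n) * ∑' j : ℕ, ffac c j * (lam * a) ^ j / (j.factorial : ℝ) :=
          tsum_mul_left
      _ = dffac lam 1 n * a ^ n * (1 + lam * a) ^ c := by
          rw [binomial_series c (lam * a) hx0.le hla]
  have hmain : ztPoiE lam a (fun i => ffac (i : ℝ) n)
      = ((1 + lam * a) ^ (1 / lam) - 1)⁻¹ * (dffac lam 1 n * a ^ n * (1 + lam * a) ^ c) := by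
    rw [ztPoiE, ← htsum]
  rw [hmain]
  -- final algebra with rpow
  have hBpos : (0:ℝ) < 1 + lam * a := by linarith
  have hB1 : (1:ℝ) < 1 + lam * a := by linarith
  have hv1 : 1 < (1 + lam * a) ^ (1 / lam) :=
    Real.one_lt_rpow_iff_of_pos hBpos |>.mpr (Or.inl ⟨hB1, by positivity⟩)
  have hv0 : (0:ℝ) < (1 + lam * a) ^ (1 / lam) := by linarith
  have hvc : (1 + lam * a) ^ c
      = (1 + lam * a) ^ (1 / lam) / (1 + lam * a) ^ n := by
    rw [hc, Real.rpow_sub hBpos, Real.rpow_natCast]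
  have hvneg : (1 + lam * a) ^ (-(1 / lam)) = ((1 + lam * a) ^ (1 / lam))⁻¹ :=
    Real.rpow_neg hBpos.le _
  rw [hvc, hvneg]
  have hBn : (0:ℝ) < (1 + lam * a) ^ n := by positivity
  have h1 : (1 + lam * a) ^ (1 / lam) - 1 ≠ 0 := by linarith
  have h2 : 1 - ((1 + lam * a) ^ (1 / lam))⁻¹ ≠ 0 := by
    have : ((1 + lam * a) ^ (1 / lam))⁻¹ < 1 := by
      rw [inv_lt_one_iff₀]
      right
      exact hv1
    linarith
  field_simp
end

section
/- Let λ > 0, α > 0 with λα < 1, and let X ∼ Poi*_λ(α) be the zero-truncated degenerate Poisson random variable with parameter α. Then for every integer n ≥ 1, the λ-falling factorial moment satisfies E[(X)_{n,λ}] = Bel_{n,λ}(α) / (1 − (1+λα)^{−1/λ}), where Bel_{n,λ} is the degenerate Bell polynomial. -/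
/-- The degenerate Bell polynomial `Bel_{n,lam}(x)`. -/
noncomputable def degBellP (lam x : ℝ) (n : ℕ) : ℝ :=
  (1 + lam * x) ^ (-(1 / lam)) *
    ∑' k : ℕ, dffac lam 1 k * dffac lam (k : ℝ) n * x ^ k / (k.factorial : ℝ)

theorem stmt_13 (lam a : ℝ) (hlam : 0 < lam) (ha : 0 < a) (hla : lam * a < 1)
    (n : ℕ) (hn : 1 ≤ n) :
    ztPoiE lam a (fun i => dffac lam (i : ℝ) n) =
      degBellP lam a n / (1 - (1 + lam * a) ^ (-(1 / lam))) := by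
  have hb : (0:ℝ) < 1 + lam * a := by nlinarith
  have hc1 : 1 < (1 + lam * a) ^ (1 / lam) := by
    rw [Real.one_lt_rpow_iff_of_pos hb]
    left
    constructor <;> [nlinarith; positivity]
  set c := (1 + lam * a) ^ (1 / lam) with hc
  have hneg : (1 + lam * a) ^ (-(1 / lam)) = c⁻¹ := by
    rw [Real.rpow_neg hb.le]
  have hzero : dffac lam ((0:ℕ):ℝ) n = 0 := by
    unfold dffac
    apply Finset.prod_eq_zero (Finset.mem_range.mpr (by omega : 0 < n))
    simp
  have hts : (∑' i : ℕ, (fun i : ℕ => dffac lam (i : ℝ) n) (i + 1) * dffac lam 1 (i + 1)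
        * a ^ (i + 1) / ((i + 1).factorial : ℝ))
      = ∑' k : ℕ, dffac lam 1 k * dffac lam (k : ℝ) n * a ^ k / (k.factorial : ℝ) := by
    have hinj : Function.Injective (fun i : ℕ => i + 1) := fun x y h => by simpa using h
    rw [← hinj.tsum_eq (f := fun k : ℕ =>
        dffac lam 1 k * dffac lam (k : ℝ) n * a ^ k / (k.factorial : ℝ))]
    · exact tsum_congr fun i => by push_cast; ring
    · intro k hk
      rcases Nat.eq_zero_or_pos k with rfl | hkpos
      · exfalso; apply hk; simp only [Function.mem_support, ne_eq, not_not]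
        simp [hzero] at *
        tauto
      · exact ⟨k - 1, by show k - 1 + 1 = k; omega⟩
  unfold ztPoiE degBellP
  rw [hts, hneg, ← hc]
  have hc0 : c ≠ 0 := by positivity
  have hc1' : c - 1 ≠ 0 := by intro h; nlinarith
  have h1c : 1 - c⁻¹ ≠ 0 := by
    rw [sub_ne_zero]
    intro h
    have : c * 1 = c * c⁻¹ := by rw [h]
    rw [mul_inv_cancel₀ hc0] at this
    nlinarith
  field_simp
end

section
/- Let λ > 0, α > 0 with λα < 1, and let X ∼ Poi*_λ(α) be the zero-truncated degenerate Poisson random variable with parameter α. Then for every integer n ≥ 1, the falling factorial moment satisfies E[(X)_n] = (1 − (1+λα)^{−1/λ})^{−1} Σ_{k=1}^n Bel_{k,λ}(α) S_{1,λ}(n,k), where Bel_{k,λ} is the degenerate Bell polynomial and S_{1,λ}(n,k) are the degenerate Stirling numbers of the first kind. -/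
private lemma abs_dffac_le (lam : ℝ) (hlam : 0 ≤ lam) (x : ℝ) (hx : 0 ≤ x)
    (n l : ℕ) (hl : l ≤ n) :
    |dffac lam x l| ≤ (x + 1 + n * lam) ^ n := by
  have hn0 : (0:ℝ) ≤ (n:ℝ) * lam := by positivity
  have hbase : (1:ℝ) ≤ x + 1 + n * lam := by linarith
  calc |dffac lam x l| = ∏ i ∈ Finset.range l, |x - i * lam| := by
        rw [dffac, Finset.abs_prod]
    _ ≤ ∏ _i ∈ Finset.range l, (x + 1 + n * lam) := by
        apply Finset.prod_le_prod (fun i _ => abs_nonneg _)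
        intro i hi
        have hi' : (i:ℝ) ≤ (n:ℝ) := by
          exact_mod_cast le_trans (Nat.le_of_lt_succ (Nat.lt_succ_of_lt (Finset.mem_range.1 hi))) hl
        calc |x - i * lam| ≤ |x| + |(i:ℝ) * lam| := abs_sub _ _
          _ = x + i * lam := by
              rw [abs_of_nonneg hx, abs_of_nonneg (by positivity)]
          _ ≤ x + 1 + n * lam := by nlinarith [mul_le_mul_of_nonneg_right hi' hlam]
    _ = (x + 1 + n * lam) ^ l := by rw [Finset.prod_const, Finset.card_range]
    _ ≤ (x + 1 + n * lam) ^ n := pow_le_pow_right₀ hbase hl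

private lemma prod_add_nat_le (K : ℕ) : ∀ k : ℕ,
    ∏ j ∈ Finset.range k, ((j:ℝ) + K) ≤
      (k.factorial : ℝ) * ∏ i ∈ Finset.range K, ((k:ℝ) + 1 + i) := by
  intro k
  induction k with
  | zero =>
      simp only [Finset.range_zero, Finset.prod_empty, Nat.factorial_zero, Nat.cast_one, one_mul,
        Nat.cast_zero]
      calc (1:ℝ) = ∏ _i ∈ Finset.range K, (1:ℝ) := by simp
        _ ≤ ∏ i ∈ Finset.range K, ((0:ℝ) + 1 + i) := by
            apply Finset.prod_le_prod (fun i _ => by norm_num)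
            intro i _
            have : (0:ℝ) ≤ (i:ℝ) := Nat.cast_nonneg i
            linarith
  | succ k ih =>
      have key : (∏ i ∈ Finset.range K, ((k:ℝ) + 1 + i)) * ((k:ℝ) + 1 + K) =
          (∏ i ∈ Finset.range K, ((k:ℝ) + 2 + i)) * ((k:ℝ) + 1) := by
        have h1 : ∏ i ∈ Finset.range (K+1), ((k:ℝ) + 1 + i) =
            (∏ i ∈ Finset.range K, ((k:ℝ) + 1 + i)) * ((k:ℝ) + 1 + K) :=
          Finset.prod_range_succ _ _
        have h2 : ∏ i ∈ Finset.range (K+1), ((k:ℝ) + 1 + i) =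
            (∏ i ∈ Finset.range K, ((k:ℝ) + 2 + i)) * ((k:ℝ) + 1) := by
          rw [Finset.prod_range_succ' (fun i : ℕ => (k:ℝ) + 1 + i) K]
          simp only [Nat.cast_add, Nat.cast_one, Nat.cast_zero, add_zero]
          congr 1
          exact Finset.prod_congr rfl fun i _ => by ring
        rw [← h1, h2]
      have hpnn : (0:ℝ) ≤ ∏ i ∈ Finset.range K, ((k:ℝ) + 1 + i) :=
        Finset.prod_nonneg (fun i _ => by positivity)
      have hprodeq : ∏ i ∈ Finset.range K, (((k+1:ℕ):ℝ) + 1 + i) =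
          ∏ i ∈ Finset.range K, ((k:ℝ) + 2 + i) :=
        Finset.prod_congr rfl fun i _ => by push_cast; ring
      have hfac : (((k+1).factorial : ℕ) : ℝ) = ((k:ℝ) + 1) * (k.factorial : ℝ) := by
        rw [Nat.factorial_succ]; push_cast; ring
      calc ∏ j ∈ Finset.range (k+1), ((j:ℝ) + K)
          = (∏ j ∈ Finset.range k, ((j:ℝ) + K)) * ((k:ℝ) + K) := by
            rw [Finset.prod_range_succ]
        _ ≤ ((k.factorial : ℝ) * ∏ i ∈ Finset.range K, ((k:ℝ) + 1 + i)) * ((k:ℝ) + K) := by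
            apply mul_le_mul_of_nonneg_right ih (by positivity)
        _ ≤ ((k.factorial : ℝ) * ∏ i ∈ Finset.range K, ((k:ℝ) + 1 + i)) * ((k:ℝ) + 1 + K) := by
            apply mul_le_mul_of_nonneg_left (by linarith) (by positivity)
        _ = (k.factorial : ℝ) * ((∏ i ∈ Finset.range K, ((k:ℝ) + 1 + i)) * ((k:ℝ) + 1 + K)) := by
            ring
        _ = (k.factorial : ℝ) * ((∏ i ∈ Finset.range K, ((k:ℝ) + 2 + i)) * ((k:ℝ) + 1)) := by
            rw [key]
        _ = (((k+1).factorial : ℕ) : ℝ) * ∏ i ∈ Finset.range K, (((k+1:ℕ):ℝ) + 1 + i) := by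
            rw [hprodeq, hfac]; ring

private lemma abs_dffac_one_le (lam : ℝ) (hlam : 0 < lam) (K : ℕ) (hK : 1 ≤ lam * K) (k : ℕ) :
    |dffac lam 1 k| ≤ lam ^ k * ((k.factorial : ℝ) * ((k:ℝ) + 1 + K) ^ K) := by
  calc |dffac lam 1 k| = ∏ j ∈ Finset.range k, |1 - (j:ℝ) * lam| := by
        rw [dffac, Finset.abs_prod]
    _ ≤ ∏ j ∈ Finset.range k, (lam * ((j:ℝ) + K)) := by
        apply Finset.prod_le_prod (fun i _ => abs_nonneg _)
        intro j _
        calc |1 - (j:ℝ) * lam| ≤ |(1:ℝ)| + |(j:ℝ) * lam| := abs_sub _ _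
          _ = 1 + (j:ℝ) * lam := by
              rw [abs_one, abs_of_nonneg (by positivity)]
          _ ≤ lam * ((j:ℝ) + K) := by nlinarith
    _ = lam ^ k * ∏ j ∈ Finset.range k, ((j:ℝ) + K) := by
        rw [Finset.prod_mul_distrib, Finset.prod_const, Finset.card_range]
    _ ≤ lam ^ k * ((k.factorial : ℝ) * ∏ i ∈ Finset.range K, ((k:ℝ) + 1 + i)) := by
        apply mul_le_mul_of_nonneg_left (prod_add_nat_le K k) (by positivity)
    _ ≤ lam ^ k * ((k.factorial : ℝ) * ((k:ℝ) + 1 + K) ^ K) := by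
        apply mul_le_mul_of_nonneg_left _ (by positivity)
        apply mul_le_mul_of_nonneg_left _ (by positivity)
        calc ∏ i ∈ Finset.range K, ((k:ℝ) + 1 + i)
            ≤ ∏ _i ∈ Finset.range K, ((k:ℝ) + 1 + K) := by
              apply Finset.prod_le_prod (fun i _ => by positivity)
              intro i hi
              have : (i:ℝ) ≤ K := by exact_mod_cast (Finset.mem_range.1 hi).le
              linarith
          _ = ((k:ℝ) + 1 + K) ^ K := by rw [Finset.prod_const, Finset.card_range]

private lemma summable_term (lam a : ℝ) (hlam : 0 < lam) (ha : 0 < a) (hla : lam * a < 1)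
    (n l : ℕ) (hl : l ≤ n) :
    Summable (fun k : ℕ => dffac lam 1 k * dffac lam (k:ℝ) l * a ^ k / (k.factorial : ℝ)) := by
  set K := ⌈lam⁻¹⌉₊ with hKdef
  have hK : 1 ≤ lam * K := by
    have h1 : lam⁻¹ ≤ (K:ℝ) := Nat.le_ceil _
    calc (1:ℝ) = lam * lam⁻¹ := by field_simp
      _ ≤ lam * K := mul_le_mul_of_nonneg_left h1 hlam.le
  have hr : ‖lam * a‖ < 1 := by rw [Real.norm_eq_abs, abs_of_pos (by positivity)]; exact hla
  have hrne : lam * a ≠ 0 := by positivity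
  have S0 : Summable (fun m : ℕ => (m:ℝ) ^ (K + n) * (lam * a) ^ m) :=
    summable_pow_mul_geometric_of_norm_lt_one (K + n) hr
  have S1' : Summable (fun k : ℕ => ((k:ℝ) + 1) ^ (K + n) * (lam * a) ^ k) := by
    have S2 := (summable_nat_add_iff 1).2 S0
    have S3 := S2.mul_left (lam * a)⁻¹
    apply S3.congr
    intro k
    push_cast
    field_simp
    ring
  have S4 := S1'.mul_left (((K:ℝ) + 1) ^ K * ((n:ℝ) * lam + 1) ^ n)
  apply Summable.of_norm_bounded S4
  intro k
  rw [Real.norm_eq_abs]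
  have hkf : (0:ℝ) < (k.factorial : ℝ) := by exact_mod_cast k.factorial_pos
  have h1 := abs_dffac_one_le lam hlam K hK k
  have h2 := abs_dffac_le lam hlam.le (k:ℝ) (by positivity) n l hl
  have habs : |dffac lam 1 k * dffac lam (k:ℝ) l * a ^ k / (k.factorial : ℝ)| =
      |dffac lam 1 k| * |dffac lam (k:ℝ) l| * a ^ k / (k.factorial : ℝ) := by
    rw [abs_div, abs_mul, abs_mul, abs_of_pos (by positivity : (0:ℝ) < a ^ k),
      abs_of_pos hkf]
  rw [habs]
  have step1 : |dffac lam 1 k| * |dffac lam (k:ℝ) l| * a ^ k / (k.factorial : ℝ) ≤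
      (lam ^ k * ((k.factorial : ℝ) * ((k:ℝ) + 1 + K) ^ K)) * (((k:ℝ) + 1 + n * lam) ^ n)
        * a ^ k / (k.factorial : ℝ) := by
    gcongr
  refine le_trans step1 ?_
  have heq : (lam ^ k * ((k.factorial : ℝ) * ((k:ℝ) + 1 + K) ^ K)) * (((k:ℝ) + 1 + n * lam) ^ n)
        * a ^ k / (k.factorial : ℝ) =
      ((k:ℝ) + 1 + K) ^ K * ((k:ℝ) + 1 + n * lam) ^ n * (lam * a) ^ k := by
    field_simp
    ring
  rw [heq]
  have b1 : ((k:ℝ) + 1 + K) ^ K ≤ ((K:ℝ) + 1) ^ K * ((k:ℝ) + 1) ^ K := by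
    rw [← mul_pow]
    apply pow_le_pow_left₀ (by positivity)
    nlinarith [Nat.cast_nonneg (α := ℝ) k, Nat.cast_nonneg (α := ℝ) K]
  have b2 : ((k:ℝ) + 1 + n * lam) ^ n ≤ ((n:ℝ) * lam + 1) ^ n * ((k:ℝ) + 1) ^ n := by
    rw [← mul_pow]
    apply pow_le_pow_left₀ (by positivity)
    have hk0 : (0:ℝ) ≤ (k:ℝ) := Nat.cast_nonneg k
    have hn0 : (0:ℝ) ≤ (n:ℝ) * lam := by positivity
    nlinarith
  calc ((k:ℝ) + 1 + K) ^ K * ((k:ℝ) + 1 + n * lam) ^ n * (lam * a) ^ k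
      ≤ (((K:ℝ) + 1) ^ K * ((k:ℝ) + 1) ^ K) * (((n:ℝ) * lam + 1) ^ n * ((k:ℝ) + 1) ^ n)
          * (lam * a) ^ k := by
        gcongr
    _ = ((K:ℝ) + 1) ^ K * ((n:ℝ) * lam + 1) ^ n * (((k:ℝ) + 1) ^ (K + n) * (lam * a) ^ k) := by
        rw [pow_add]; ring

theorem stmt_14 (lam a : ℝ) (hlam : 0 < lam) (ha : 0 < a) (hla : lam * a < 1)
    (S1 : ℕ → ℕ → ℝ)
    (hS1 : ∀ (n : ℕ) (x : ℝ),
      ffac x n = ∑ l ∈ Finset.range (n + 1), S1 n l * dffac lam x l)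
    (n : ℕ) (hn : 1 ≤ n) :
    ztPoiE lam a (fun i => ffac (i : ℝ) n) =
      (1 - (1 + lam * a) ^ (-(1 / lam)))⁻¹ *
        ∑ k ∈ Finset.Icc 1 n, degBellP lam a k * S1 n k := by
  have hpos : (0:ℝ) < 1 + lam * a := by positivity
  set u : ℝ := (1 + lam * a) ^ (1 / lam) with hu
  have hu1 : 1 < u :=
    (Real.one_lt_rpow_iff_of_pos hpos).2 (Or.inl ⟨by nlinarith, by positivity⟩)
  have hune : u ≠ 0 := by linarith
  have huinv : (1 + lam * a) ^ (-(1 / lam)) = u⁻¹ := Real.rpow_neg hpos.le _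
  set F : ℕ → ℕ → ℝ :=
    fun l k => dffac lam 1 k * dffac lam (k:ℝ) l * a ^ k / (k.factorial : ℝ) with hF
  have hFsum : ∀ l, l ≤ n → Summable (F l) := fun l hl => summable_term lam a hlam ha hla n l hl
  have hFshift : ∀ l, l ≤ n → Summable (fun i => F l (i + 1)) :=
    fun l hl => (summable_nat_add_iff 1).2 (hFsum l hl)
  have hdffac0 : ∀ l : ℕ, 1 ≤ l → dffac lam 0 l = 0 := by
    intro l hl
    rw [dffac]
    apply Finset.prod_eq_zero (Finset.mem_range.2 hl)
    simp
  have hS10 : S1 n 0 = 0 := by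
    have h := hS1 n 0
    have h1 : ffac 0 n = 0 := by
      rw [ffac]
      apply Finset.prod_eq_zero (Finset.mem_range.2 hn)
      simp
    rw [h1, Finset.sum_eq_single 0 (fun l _ hl => by
      rw [hdffac0 l (Nat.one_le_iff_ne_zero.2 hl), mul_zero])
      (fun h0 => absurd (Finset.mem_range.2 (Nat.succ_pos n)) h0)] at h
    simp only [dffac, Finset.range_zero, Finset.prod_empty, mul_one] at h
    exact h.symm
  have hF0 : ∀ l : ℕ, 1 ≤ l → F l 0 = 0 := by
    intro l hl
    simp only [hF, Nat.cast_zero, hdffac0 l hl]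
    simp
  have hBel : ∀ l, 1 ≤ l → l ≤ n → (∑' i : ℕ, F l (i + 1)) = u * degBellP lam a l := by
    intro l hl1 hln
    have hz := Summable.tsum_eq_zero_add (hFsum l hln)
    rw [hF0 l hl1, zero_add] at hz
    rw [← hz, degBellP, huinv, ← mul_assoc, mul_inv_cancel₀ hune, one_mul]
  rw [ztPoiE]
  have htsum : (∑' i : ℕ, (fun i : ℕ => ffac (i:ℝ) n) (i + 1) * dffac lam 1 (i + 1) *
        a ^ (i + 1) / (((i : ℕ) + 1).factorial : ℝ))
      = ∑' i : ℕ, ∑ l ∈ Finset.range (n + 1), S1 n l * F l (i + 1) := by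
    apply tsum_congr
    intro i
    show ffac (((i + 1 : ℕ) : ℝ)) n * dffac lam 1 (i + 1) * a ^ (i + 1) /
        (((i : ℕ) + 1).factorial : ℝ) = _
    rw [hS1 n (((i + 1 : ℕ) : ℝ)), Finset.sum_mul, Finset.sum_mul, Finset.sum_div]
    exact Finset.sum_congr rfl fun l _ => by simp only [hF]; ring
  rw [htsum]
  rw [Summable.tsum_finsetSum (fun l hl => ((hFshift l (Nat.lt_succ_iff.1 (Finset.mem_range.1 hl))).mul_left _))]
  have hterm : ∀ l ∈ Finset.range (n + 1),
      (∑' i : ℕ, S1 n l * F l (i + 1)) = S1 n l * ∑' i : ℕ, F l (i + 1) :=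
    fun l _ => tsum_mul_left
  rw [Finset.sum_congr rfl hterm]
  have hsub : Finset.Icc 1 n ⊆ Finset.range (n + 1) := by
    intro x hx
    rw [Finset.mem_range, Nat.lt_succ_iff]
    exact (Finset.mem_Icc.1 hx).2
  rw [← Finset.sum_subset hsub (fun x hx hx' => by
    have hx0 : x = 0 := by
      rw [Finset.mem_range, Nat.lt_succ_iff] at hx
      rw [Finset.mem_Icc] at hx'
      omega
    rw [hx0, hS10, zero_mul])]
  have hBelsum : ∑ l ∈ Finset.Icc 1 n, S1 n l * ∑' i : ℕ, F l (i + 1) =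
      ∑ l ∈ Finset.Icc 1 n, S1 n l * (u * degBellP lam a l) :=
    Finset.sum_congr rfl (fun l hl => by
      rw [Finset.mem_Icc] at hl
      rw [hBel l hl.1 hl.2])
  rw [hBelsum, huinv]
  have hsumeq : ∑ l ∈ Finset.Icc 1 n, S1 n l * (u * degBellP lam a l) =
      u * ∑ l ∈ Finset.Icc 1 n, degBellP lam a l * S1 n l := by
    rw [Finset.mul_sum]
    exact Finset.sum_congr rfl (fun l _ => by ring)
  rw [hsumeq, ← hu]
  have hcoef : (u - 1)⁻¹ * u = (1 - u⁻¹)⁻¹ := by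
    have h1 : u - 1 ≠ 0 := by
      intro h; rw [sub_eq_zero] at h; exact absurd h.symm (ne_of_lt hu1)
    have h2 : 1 - u⁻¹ ≠ 0 := by
      have : u⁻¹ < 1 := by
        rw [inv_lt_one_iff₀]
        right; exact hu1
      intro h; rw [sub_eq_zero] at h; linarith
    field_simp
  rw [← mul_assoc, hcoef]
end

section
/- For every real x > 0 and every integer n ≥ 0, the degenerate Bell polynomial converges to the ordinary Bell polynomial as the degeneracy parameter tends to zero: lim_{λ→0⁺} Bel_{n,λ}(x) = e^{−x} Σ_{k=0}^∞ k^n x^k / k!, where the right-hand side equals the ordinary Bell polynomial Bel_n(x) by Dobinski's formula. -/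
open Filter Real Set Finset

lemma pre_lim (x : ℝ) (hx : 0 < x) :
    Tendsto (fun lam : ℝ => (1 + lam * x) ^ (-(1 / lam)))
      (nhdsWithin 0 (Set.Ioi 0)) (nhds (Real.exp (-x))) := by
  have hd : HasDerivAt (fun t : ℝ => Real.log (1 + t * x)) x 0 := by
    have h1 : HasDerivAt (fun t : ℝ => 1 + t * x) x 0 := by
      simpa using ((hasDerivAt_id (0:ℝ)).mul_const x).const_add 1
    have h2 := (Real.hasDerivAt_log (by norm_num : (1:ℝ) + 0 * x ≠ 0)).comp 0 h1
    rw [show (1 + 0 * x : ℝ)⁻¹ * x = x by norm_num] at h2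
    exact h2
  have hslope : Tendsto (fun t : ℝ => Real.log (1 + t * x) / t)
      (nhdsWithin 0 (Set.Ioi 0)) (nhds x) := by
    have := hasDerivAt_iff_tendsto_slope.mp hd
    have h := this.mono_left (nhdsWithin_mono 0 (by intro t ht; exact ne_of_gt ht))
    refine h.congr (fun t => ?_)
    simp [slope_def_field]
  have hexp : Tendsto (fun t : ℝ => Real.exp (-(Real.log (1 + t * x) / t)))
      (nhdsWithin 0 (Set.Ioi 0)) (nhds (Real.exp (-x))) :=
    (Real.continuous_exp.tendsto _).comp hslope.neg
  refine hexp.congr' ?_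
  filter_upwards [self_mem_nhdsWithin] with t (ht : 0 < t)
  rw [Real.rpow_def_of_pos (by positivity : (0:ℝ) < 1 + t * x)]
  ring_nf

lemma aux_pos (k n : ℕ) : (0:ℝ) < ((k:ℝ) + n) ^ n := by
  rcases Nat.eq_zero_or_pos n with h | h
  · simp [h]
  · exact pow_pos (add_pos_of_nonneg_of_pos (Nat.cast_nonneg k)
      (by exact_mod_cast h)) n

lemma bound_summable (x : ℝ) (hx : 0 < x) (n : ℕ) :
    Summable (fun k : ℕ =>
      (∏ i ∈ Finset.range k, (1 + (i:ℝ) * (2*x)⁻¹)) * ((k:ℝ) + n) ^ n * x ^ k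
        / (k.factorial : ℝ)) := by
  set c : ℝ := (2*x)⁻¹ with hc
  have hc0 : 0 < c := by positivity
  set b : ℕ → ℝ := fun k =>
    (∏ i ∈ Finset.range k, (1 + (i:ℝ) * c)) * ((k:ℝ) + n) ^ n * x ^ k
      / (k.factorial : ℝ) with hb
  have hprodpos : ∀ k : ℕ, (0:ℝ) < ∏ i ∈ Finset.range k, (1 + (i:ℝ) * c) := by
    intro k
    exact Finset.prod_pos (fun i _ => by positivity)
  have hbpos : ∀ k, 0 < b k := by
    intro k
    have := aux_pos k n
    have := hprodpos k
    positivity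
  have key : ∀ k : ℕ, b (k+1) / b k
      = (1 + (k:ℝ) * c) / ((k:ℝ) + 1) * x * (((k:ℝ) + 1 + n) / ((k:ℝ) + n)) ^ n := by
    intro k
    have h1 : ((k:ℝ) + n) ^ n ≠ 0 := ne_of_gt (aux_pos k n)
    have h2 : (0:ℝ) < (k.factorial : ℝ) := by exact_mod_cast k.factorial_pos
    have h3 : (0:ℝ) < ∏ i ∈ Finset.range k, (1 + (i:ℝ) * c) := hprodpos k
    rw [hb]
    simp only [Finset.prod_range_succ, Nat.factorial_succ, pow_succ, Nat.cast_mul,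
      Nat.cast_add, Nat.cast_one, div_pow]
    generalize ∏ i ∈ Finset.range k, (1 + (i:ℝ) * c) = P at h3 ⊢
    field_simp
  have h1 : Tendsto (fun k : ℕ => (1 + (k:ℝ) * c) / ((k:ℝ) + 1)) atTop (nhds c) := by
    have h0 : Tendsto (fun k : ℕ => (1 - c) * (1 / ((k:ℝ) + 1)) + c) atTop (nhds c) := by
      have := tendsto_one_div_add_atTop_nhds_zero_nat (𝕜 := ℝ)
      have := (this.const_mul (1 - c)).add (tendsto_const_nhds (x := c))
      simpa using this
    refine h0.congr (fun k => ?_)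
    have : ((k:ℝ) + 1) ≠ 0 := by positivity
    field_simp
    ring
  have h2 : Tendsto (fun k : ℕ => (((k:ℝ) + 1 + n) / ((k:ℝ) + n)) ^ n) atTop (nhds 1) := by
    have hinv : Tendsto (fun k : ℕ => ((k:ℝ) + n)⁻¹) atTop (nhds 0) := by
      exact (tendsto_atTop_add_const_right atTop (n:ℝ)
        tendsto_natCast_atTop_atTop).inv_tendsto_atTop
    have h0 : Tendsto (fun k : ℕ => (1 + ((k:ℝ) + n)⁻¹) ^ n) atTop (nhds 1) := by
      have := ((tendsto_const_nhds (x := (1:ℝ))).add hinv).pow n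
      simpa using this
    refine h0.congr' ?_
    filter_upwards [eventually_ge_atTop 1] with k hk
    have hkn : ((k:ℝ) + n) ≠ 0 := by
      have : (1:ℝ) ≤ (k:ℝ) := by exact_mod_cast hk
      positivity
    field_simp
    ring
  have hratio : Tendsto (fun k : ℕ => ‖b (k+1)‖ / ‖b k‖) atTop (nhds (c * x * 1)) := by
    have := (h1.mul (tendsto_const_nhds (x := x))).mul h2
    refine this.congr (fun k => ?_)
    rw [Real.norm_eq_abs, Real.norm_eq_abs, abs_of_pos (hbpos _), abs_of_pos (hbpos _),
      key k]
  have hlt : c * x * 1 < 1 := by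
    rw [hc, mul_one, inv_mul_eq_div, div_lt_one (by positivity)]
    linarith
  exact summable_of_ratio_test_tendsto_lt_one hlt
    (Filter.Eventually.of_forall (fun k => ne_of_gt (hbpos k))) hratio

theorem stmt_17 (x : ℝ) (hx : 0 < x) (n : ℕ) :
    Filter.Tendsto (fun lam : ℝ => degBellP lam x n)
      (nhdsWithin 0 (Set.Ioi 0))
      (nhds (Real.exp (-x) * ∑' k : ℕ, (k : ℝ) ^ n * x ^ k / (k.factorial : ℝ))) := by
  set c : ℝ := (2*x)⁻¹ with hc
  have hc0 : 0 < c := by positivity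
  have hsum : Tendsto
      (fun lam : ℝ => ∑' k : ℕ, dffac lam 1 k * dffac lam (k : ℝ) n * x ^ k / (k.factorial : ℝ))
      (nhdsWithin 0 (Set.Ioi 0))
      (nhds (∑' k : ℕ, (k : ℝ) ^ n * x ^ k / (k.factorial : ℝ))) := by
    apply tendsto_tsum_of_dominated_convergence (bound_summable x hx n)
    · intro k
      have hcont : ∀ (a : ℝ) (m : ℕ), Continuous fun lam : ℝ => dffac lam a m := by
        intro a m
        unfold dffac
        exact continuous_finset_prod _ (fun i _ => by continuity)
    -- termwise limit
      have ht1 : Tendsto (fun lam : ℝ => dffac lam 1 k) (nhdsWithin 0 (Set.Ioi 0))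
          (nhds 1) := by
        have := ((hcont 1 k).tendsto 0).mono_left
          (nhdsWithin_le_nhds (s := Set.Ioi (0:ℝ)))
        simpa [dffac] using this
      have ht2 : Tendsto (fun lam : ℝ => dffac lam (k : ℝ) n) (nhdsWithin 0 (Set.Ioi 0))
          (nhds ((k:ℝ) ^ n)) := by
        have := ((hcont (k:ℝ) n).tendsto 0).mono_left
          (nhdsWithin_le_nhds (s := Set.Ioi (0:ℝ)))
        simpa [dffac] using this
      have := ((ht1.mul ht2).mul tendsto_const_nhds (b := x ^ k)).div_const (k.factorial : ℝ)
      simpa using this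
    · have hmem : Set.Ioo (0:ℝ) (min c 1) ∈ nhdsWithin 0 (Set.Ioi 0) :=
        Ioo_mem_nhdsGT_of_mem ⟨le_refl 0, lt_min hc0 one_pos⟩
      filter_upwards [hmem] with lam hlam k
      obtain ⟨hl0, hl1⟩ := hlam
      have hlc : lam ≤ c := le_of_lt (lt_of_lt_of_le hl1 (min_le_left _ _))
      have hl1' : lam ≤ 1 := le_of_lt (lt_of_lt_of_le hl1 (min_le_right _ _))
      have hA : |dffac lam 1 k| ≤ ∏ i ∈ Finset.range k, (1 + (i:ℝ) * c) := by
        rw [dffac, Finset.abs_prod]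
        refine Finset.prod_le_prod (fun i _ => abs_nonneg _) (fun i _ => ?_)
        have hi : (0:ℝ) ≤ i := Nat.cast_nonneg i
        have h1 : (i:ℝ) * lam ≤ (i:ℝ) * c := by nlinarith
        have h2 : (0:ℝ) ≤ (i:ℝ) * lam := by positivity
        have h3 : (0:ℝ) ≤ (i:ℝ) * c := by positivity
        rw [abs_le]
        constructor <;> nlinarith
      have hB : |dffac lam (k : ℝ) n| ≤ ((k:ℝ) + n) ^ n := by
        rw [dffac, Finset.abs_prod]
        rw [show ((k:ℝ) + n) ^ n = ∏ _j ∈ Finset.range n, ((k:ℝ) + n) by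
          rw [Finset.prod_const, Finset.card_range]]
        refine Finset.prod_le_prod (fun j _ => abs_nonneg _) (fun j hj => ?_)
        have hj' : (j:ℝ) ≤ n := by
          have := (Finset.mem_range.mp hj).le
          exact_mod_cast this
        have h2 : (0:ℝ) ≤ (j:ℝ) * lam := by positivity
        have h1 : (j:ℝ) * lam ≤ (j:ℝ) := by nlinarith [Nat.cast_nonneg (α := ℝ) j]
        have hk0 : (0:ℝ) ≤ (k:ℝ) := Nat.cast_nonneg k
        have hn0 : (0:ℝ) ≤ (n:ℝ) := Nat.cast_nonneg n
        rw [abs_le]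
        constructor <;> nlinarith
      have hfac : (0:ℝ) < (k.factorial : ℝ) := by exact_mod_cast k.factorial_pos
      rw [Real.norm_eq_abs, abs_div, abs_mul, abs_mul,
        abs_of_pos (pow_pos hx k), abs_of_pos hfac]
      gcongr
  have hpre := pre_lim x hx
  have := hpre.mul hsum
  simpa [degBellP] using this
end
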